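/- arXiv:2510.26895 — 6 statements merged into one kernel-verified Lean document; each statement's English description precedes it below -/
import Mathlib

section
/- If the prior state γ = |ψ⟩⟨ψ| is pure and N(γ) is full rank, then the Petz recovery map N̂_γ is the erasure channel: N̂_γ(X) = Tr(X)·|ψ⟩⟨ψ| for every matrix X. -/
open scoped ComplexOrder
open Matrix BigOperators

def IsCPTP {d : ℕ} (N : Matrix (Fin d) (Fin d) ℂ → Matrix (Fin d) (Fin d) ℂ) : Prop :=
  ∃ (m : ℕ) (K : Fin m → Matrix (Fin d) (Fin d) ℂ),
    (∀ X, N X = ∑ i, K i * X * (K i)ᴴ) ∧ (∑ i, (K i)ᴴ * K i = 1)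

/-!
A pure state `γ = |ψ⟩⟨ψ|` is a projection, so it is its own positive square root, and it
compresses every matrix to a multiple of itself: `γ M γ = Tr(M γ) γ`. The Petz map is therefore
`Tr(N†(N(γ)^{-1/2} X N(γ)^{-1/2}) γ) • γ`, and by duality that trace equals
`Tr(N(γ)^{-1/2} X N(γ)^{-1/2} N(γ)) = Tr X`.
-/

namespace Matrix

variable {n R : Type*} [Fintype n]

theorem trace_mul_vecMulVec [CommSemiring R] (M : Matrix n n R) (u v : n → R) :
    trace (M * vecMulVec u v) = v ⬝ᵥ M *ᵥ u := by
  rw [mul_vecMulVec, trace_vecMulVec, dotProduct_comm]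

theorem vecMulVec_mul_mul_vecMulVec_self [CommSemiring R] (u v : n → R) (M : Matrix n n R) :
    vecMulVec u v * M * vecMulVec u v = trace (M * vecMulVec u v) • vecMulVec u v := by
  rw [trace_mul_vecMulVec, Matrix.mul_assoc, mul_vecMulVec, vecMulVec_mul_vecMulVec,
    vecMulVec_smul]

theorem trace_conjTranspose_mul_of_isHermitian [CommRing R] [StarRing R] {ρ : Matrix n n R}
    (hρ : ρ.IsHermitian) (B : Matrix n n R) : trace (Bᴴ * ρ) = star (trace (B * ρ)) := by
  rw [← trace_conjTranspose, conjTranspose_mul, hρ.eq, trace_mul_comm]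

theorem PosSemidef.eq_of_mul_self_eq_mul_self [DecidableEq n] {A B : Matrix n n ℂ}
    (hA : A.PosSemidef) (hB : B.PosSemidef) (h : A * A = B * B) : A = B := by
  open scoped MatrixOrder Matrix.Norms.L2Operator in
  exact (CFC.mul_self_eq_mul_self_iff A B hA.nonneg hB.nonneg).mp h

theorem trace_adjoint_conj_inv_mul_eq_trace [DecidableEq n]
    {N Nadj : Matrix n n ℂ → Matrix n n ℂ} (hadj : ∀ X Y, (Xᴴ * N Y).trace = ((Nadj X)ᴴ * Y).trace)
    {ρ r : Matrix n n ℂ} (hρ : ρ.IsHermitian) (hr : r.IsHermitian) (hr_det : IsUnit r.det)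
    (hrr : r * r = N ρ) (X : Matrix n n ℂ) :
    (Nadj (r⁻¹ * X * r⁻¹) * ρ).trace = X.trace := by
  have hcancel : (r⁻¹ * X * r⁻¹)ᴴ * N ρ = r⁻¹ * Xᴴ * r := by
    rw [← hrr, conjTranspose_mul, conjTranspose_mul, conjTranspose_nonsing_inv, hr.eq]
    simp only [Matrix.mul_assoc, nonsing_inv_mul_cancel_left r r hr_det]
  have h := hadj (r⁻¹ * X * r⁻¹) ρ
  rw [hcancel, trace_mul_comm, ← Matrix.mul_assoc, mul_nonsing_inv r hr_det, Matrix.one_mul,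
    trace_conjTranspose, trace_conjTranspose_mul_of_isHermitian hρ] at h
  exact star_injective h.symm

end Matrix

theorem petz_pure_prior_is_erasure_general {d : ℕ}
    (N Nadj : Matrix (Fin d) (Fin d) ℂ → Matrix (Fin d) (Fin d) ℂ)
    (hadj : ∀ X Y, (Xᴴ * N Y).trace = ((Nadj X)ᴴ * Y).trace)
    (ψ : Fin d → ℂ) (hψ : star ψ ⬝ᵥ ψ = 1)
    (γ : Matrix (Fin d) (Fin d) ℂ) (hγ : γ = Matrix.vecMulVec ψ (star ψ))
    (s r : Matrix (Fin d) (Fin d) ℂ)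
    (hs : s.PosSemidef) (hss : s * s = γ)
    (hr : r.PosDef) (hrr : r * r = N γ) :
    ∀ X : Matrix (Fin d) (Fin d) ℂ,
      s * Nadj (r⁻¹ * X * r⁻¹) * s = X.trace • γ := by
  intro X
  have hγ_sandwich (M : Matrix (Fin d) (Fin d) ℂ) : γ * M * γ = (M * γ).trace • γ := by
    rw [hγ, vecMulVec_mul_mul_vecMulVec_self]
  have hγ_psd : γ.PosSemidef := hγ ▸ posSemidef_vecMulVec_self_star ψ
  have hγ_trace : γ.trace = 1 := by rw [hγ, trace_vecMulVec, dotProduct_comm, hψ]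
  have hγ_idem : γ * γ = γ := by
    simpa [hγ_trace] using hγ_sandwich 1
  have hs_eq : s = γ := hs.eq_of_mul_self_eq_mul_self hγ_psd (by rw [hss, hγ_idem])
  rw [hs_eq, hγ_sandwich, trace_adjoint_conj_inv_mul_eq_trace hadj hγ_psd.isHermitian hr.isHermitian
    ((isUnit_iff_isUnit_det r).mp hr.isUnit) hrr]

/-- If the prior `γ = |ψ⟩⟨ψ|` is pure (and `N γ` is full rank), the Petz recovery map is
the erasure channel `X ↦ Tr(X) • |ψ⟩⟨ψ|`.  Here `s` is the positive semidefinite square root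
of `γ` (which equals `γ` itself) and `r` the positive square root of `N γ`. -/
theorem petz_pure_prior_is_erasure {d : ℕ}
    (N Nadj : Matrix (Fin d) (Fin d) ℂ → Matrix (Fin d) (Fin d) ℂ)
    (hN : IsCPTP N)
    (hadj : ∀ X Y, (Xᴴ * N Y).trace = ((Nadj X)ᴴ * Y).trace)
    (ψ : Fin d → ℂ) (hψ : star ψ ⬝ᵥ ψ = 1)
    (γ : Matrix (Fin d) (Fin d) ℂ) (hγ : γ = Matrix.vecMulVec ψ (star ψ))
    (hNγ : (N γ).PosDef)
    (s r : Matrix (Fin d) (Fin d) ℂ)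
    (hs : s.PosSemidef) (hss : s * s = γ)
    (hr : r.PosDef) (hrr : r * r = N γ) :
    ∀ X : Matrix (Fin d) (Fin d) ℂ,
      s * Nadj (r⁻¹ * X * r⁻¹) * s = X.trace • γ :=
  petz_pure_prior_is_erasure_general N Nadj hadj ψ hψ γ hγ s r hs hss hr hrr
end

section
/- Let U be a unitary on H_S ⊗ H_E and let γ ⊗ ξ be a product of full-rank density matrices such that U(γ⊗ξ)U† = γ'⊗ξ' for some density matrices γ', ξ'. Then γ' = Tr_E(U(γ⊗ξ)U†) and ξ' is full rank, and writing ξ = Σ_k p_k |e_k⟩⟨e_k|, ξ' = Σ_j p'_j |e'_j⟩⟨e'_j| spectral decompositions, the identity √(p_k) γ^{1/2} ⟨e_k|U†|e'_j⟩ = √(p'_j) ⟨e_k|U†|e'_j⟩ γ'^{1/2} holds for all j, k, where ⟨e_k|U†|e'_j⟩ denotes the partial matrix element (1_S ⊗ ⟨e_k|) U† (1_S ⊗ |e'_j⟩) acting on H_S. -/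
open scoped ComplexOrder
open Matrix BigOperators Kronecker

noncomputable def ptraceE {dS dE : ℕ} (M : Matrix (Fin dS × Fin dE) (Fin dS × Fin dE) ℂ) :
    Matrix (Fin dS) (Fin dS) ℂ :=
  Matrix.of fun i j => ∑ k, M (i, k) (j, k)

/-- The partial matrix element `(1_S ⊗ ⟨e_k|) U† (1_S ⊗ |e'_j⟩)` as an operator on `H_S`. -/
noncomputable def partialElt {dS dE : ℕ}
    (U : Matrix (Fin dS × Fin dE) (Fin dS × Fin dE) ℂ)
    (e : Fin dE → Fin dE → ℂ) (e' : Fin dE → Fin dE → ℂ) (j k : Fin dE) :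
    Matrix (Fin dS) (Fin dS) ℂ :=
  Matrix.of fun a b => ∑ x, ∑ y, (starRingEnd ℂ) (e k x) * (Uᴴ (a, x) (b, y)) * e' j y

/-!
Since `U` is unitary, `U (γ ⊗ ξ) U† = γ' ⊗ ξ'` says `(γ ⊗ ξ) U† = U† (γ' ⊗ ξ')`. Sandwiching this
between `1 ⊗ ⟨e_k|` and `1 ⊗ |e'_j⟩`, using `(1 ⊗ ⟨e_k|) (γ ⊗ ξ) = p_k γ (1 ⊗ ⟨e_k|)` and
`(γ' ⊗ ξ') (1 ⊗ |e'_j⟩) = p'_j (1 ⊗ |e'_j⟩) γ'`, gives `(p_k γ) X = X (p'_j γ')` for the partial matrix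
element `X = ⟨e_k|U†|e'_j⟩`. With `S = √p_k √γ` and `T = √p'_j √γ'` this reads `S² X = X T²`, and
this passes to the square roots: the block matrix `[[0, X], [0, 0]]` commutes with
`diag(S, T)²`, hence with its square root `diag(S, T)`, which is a continuous function of it.
Finally `γ' ⊗ ξ' = U (γ ⊗ ξ) U†` is invertible, so the positive semidefinite `ξ'` is definite.
-/

open scoped MatrixOrder

namespace Matrix

section SquareRoot

variable {𝕜 m n : Type*} [RCLike 𝕜] [Fintype m] [Fintype n] [DecidableEq m] [DecidableEq n]

theorem PosSemidef.commute_of_commute_mul_self {M Y : Matrix n n 𝕜} (hM : M.PosSemidef)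
    (h : Commute (M * M) Y) : Commute M Y := by
  have := h.cfc_nnreal NNReal.sqrt
  rwa [← CFC.sqrt_eq_cfc, CFC.sqrt_mul_self M hM.nonneg] at this

theorem PosSemidef.fromBlocks_zero₁₂_zero₂₁ {S : Matrix m m 𝕜} {T : Matrix n n 𝕜}
    (hS : S.PosSemidef) (hT : T.PosSemidef) : (fromBlocks S 0 0 T).PosSemidef := by
  obtain ⟨A, rfl⟩ := CStarAlgebra.nonneg_iff_eq_star_mul_self.mp hS.nonneg
  obtain ⟨B, rfl⟩ := CStarAlgebra.nonneg_iff_eq_star_mul_self.mp hT.nonneg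
  simpa [fromBlocks_conjTranspose, fromBlocks_multiply, star_eq_conjTranspose] using
    posSemidef_conjTranspose_mul_self (fromBlocks A 0 0 B)

theorem PosSemidef.mul_eq_mul_of_mul_self_mul_eq {S : Matrix m m 𝕜} {T : Matrix n n 𝕜}
    {X : Matrix m n 𝕜} (hS : S.PosSemidef) (hT : T.PosSemidef)
    (h : S * S * X = X * (T * T)) : S * X = X * T := by
  have hcomm : Commute (fromBlocks S 0 0 T * fromBlocks S 0 0 T) (fromBlocks 0 X 0 0) := by
    simp [Commute, SemiconjBy, fromBlocks_multiply, h]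
  have := ((hS.fromBlocks_zero₁₂_zero₂₁ hT).commute_of_commute_mul_self hcomm).eq
  simpa [fromBlocks_multiply] using congrArg toBlocks₁₂ this

end SquareRoot

section TensorColumn

variable {R ι κ : Type*} [Fintype ι] [Fintype κ] [DecidableEq ι]

/-- The operator `1 ⊗ |v⟩` from `R^ι` to `R^ι ⊗ R^κ`. -/
def tensorCol (ι : Type*) [DecidableEq ι] [Zero R] (v : κ → R) : Matrix (ι × κ) ι R :=
  of fun q b => if q.1 = b then v q.2 else 0

theorem kronecker_mul_tensorCol [CommSemiring R] (A : Matrix ι ι R) {B : Matrix κ κ R}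
    {v : κ → R} {μ : R} (hv : B *ᵥ v = μ • v) :
    (A ⊗ₖ B) * tensorCol ι v = μ • (tensorCol ι v * A) := by
  ext ⟨a, x⟩ b
  have hx := congrFun hv x
  simp only [mulVec, dotProduct, Pi.smul_apply, smul_eq_mul] at hx
  simp [tensorCol, mul_apply, Fintype.sum_prod_type, mul_assoc, ← Finset.mul_sum, hx]
  ring

theorem conjTranspose_tensorCol_mul_kronecker [CommSemiring R] [StarRing R] {A : Matrix ι ι R}
    {B : Matrix κ κ R} (hA : A.IsHermitian) (hB : B.IsHermitian) {v : κ → R} {μ : R}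
    (hμ : star μ = μ) (hv : B *ᵥ v = μ • v) :
    (tensorCol ι v)ᴴ * (A ⊗ₖ B) = μ • (A * (tensorCol ι v)ᴴ) := by
  simpa [conjTranspose_kronecker, hA.eq, hB.eq, hμ] using
    congrArg conjTranspose (kronecker_mul_tensorCol A hv)

end TensorColumn

theorem sum_smul_vecMulVec_mulVec_of_orthonormal {R ι n : Type*} [CommSemiring R] [StarRing R]
    [Fintype ι] [Fintype n] [DecidableEq ι] (c : ι → R) {e : ι → n → R}
    (he : ∀ k l, star (e k) ⬝ᵥ e l = if k = l then 1 else 0) (k : ι) :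
    (∑ l, c l • vecMulVec (e l) (star (e l))) *ᵥ e k = c k • e k := by
  simp [sum_mulVec, smul_mulVec, vecMulVec_mulVec, he]

theorem isUnit_of_isUnit_kronecker_right {R m n : Type*} [CommRing R] [Fintype m] [Fintype n]
    [DecidableEq m] [DecidableEq n] [Nonempty m] {A : Matrix m m R} {B : Matrix n n R}
    (h : IsUnit (A ⊗ₖ B)) : IsUnit B := by
  rw [isUnit_iff_isUnit_det, det_kronecker] at h
  rw [isUnit_iff_isUnit_det]
  exact (isUnit_pow_iff Fintype.card_ne_zero).mp (isUnit_of_mul_isUnit_right h)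

end Matrix

theorem ofReal_sqrt_smul_mul_self {A : Type*} [Ring A] [Algebra ℂ A] {x : ℝ} (hx : 0 ≤ x)
    (a : A) : ((√x : ℂ) • a) * ((√x : ℂ) • a) = (x : ℂ) • (a * a) := by
  rw [smul_mul_smul_comm, ← Complex.ofReal_mul, Real.mul_self_sqrt hx]

theorem ptraceE_kronecker {dS dE : ℕ} (A : Matrix (Fin dS) (Fin dS) ℂ)
    (B : Matrix (Fin dE) (Fin dE) ℂ) : ptraceE (A ⊗ₖ B) = B.trace • A := by
  ext i j
  simp [ptraceE, trace, ← Finset.mul_sum, mul_comm]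

theorem partialElt_eq_tensorCol {dS dE : ℕ} (U : Matrix (Fin dS × Fin dE) (Fin dS × Fin dE) ℂ)
    (e e' : Fin dE → Fin dE → ℂ) (j k : Fin dE) :
    partialElt U e e' j k = (tensorCol (Fin dS) (e k))ᴴ * Uᴴ * tensorCol (Fin dS) (e' j) := by
  ext a b
  simp [partialElt, tensorCol, mul_apply, Fintype.sum_prod_type, Finset.sum_mul,
    apply_ite (starRingEnd ℂ), ite_mul]
  exact Finset.sum_comm

theorem partialElt_intertwines {dS dE : ℕ} {U : Matrix (Fin dS × Fin dE) (Fin dS × Fin dE) ℂ}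
    {γ γ' : Matrix (Fin dS) (Fin dS) ℂ} {ξ ξ' : Matrix (Fin dE) (Fin dE) ℂ}
    (hγ : γ.IsHermitian) (hξ : ξ.IsHermitian) (hU : (γ ⊗ₖ ξ) * Uᴴ = Uᴴ * (γ' ⊗ₖ ξ'))
    {e e' : Fin dE → Fin dE → ℂ} {p p' : ℝ} {j k : Fin dE}
    (hek : ξ *ᵥ e k = (p : ℂ) • e k) (he'j : ξ' *ᵥ e' j = (p' : ℂ) • e' j) :
    ((p : ℂ) • γ) * partialElt U e e' j k = partialElt U e e' j k * ((p' : ℂ) • γ') := by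
  have hV := conjTranspose_tensorCol_mul_kronecker hγ hξ (by simp) hek
  have hW := kronecker_mul_tensorCol γ' he'j
  rw [partialElt_eq_tensorCol]
  generalize tensorCol (Fin dS) (e k) = V at hV ⊢
  generalize tensorCol (Fin dS) (e' j) = W at hW ⊢
  calc ((p : ℂ) • γ) * (Vᴴ * Uᴴ * W) = ((p : ℂ) • (γ * Vᴴ)) * Uᴴ * W := by
        simp only [Matrix.smul_mul, Matrix.mul_assoc]
    _ = Vᴴ * ((γ ⊗ₖ ξ) * Uᴴ) * W := by rw [← hV, Matrix.mul_assoc Vᴴ]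
    _ = Vᴴ * Uᴴ * ((γ' ⊗ₖ ξ') * W) := by simp only [hU, Matrix.mul_assoc]
    _ = (Vᴴ * Uᴴ * W) * ((p' : ℂ) • γ') := by simp only [hW, Matrix.mul_smul, Matrix.mul_assoc]

theorem product_preservation_intertwining_general {dS dE : ℕ}
    (U : Matrix (Fin dS × Fin dE) (Fin dS × Fin dE) ℂ)
    (hU : U ∈ Matrix.unitaryGroup (Fin dS × Fin dE) ℂ)
    (γ γ' : Matrix (Fin dS) (Fin dS) ℂ) (ξ ξ' : Matrix (Fin dE) (Fin dE) ℂ)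
    (hγ : γ.PosDef) (hγtr : γ.trace = 1)
    (hξ : ξ.PosDef)
    (hξ' : ξ'.PosSemidef) (hξ'tr : ξ'.trace = 1)
    (hprod : U * (γ ⊗ₖ ξ) * Uᴴ = γ' ⊗ₖ ξ')
    -- spectral decompositions of ξ and ξ'
    (p : Fin dE → ℝ) (e : Fin dE → Fin dE → ℂ)
    (hp : ∀ k, 0 ≤ p k)
    (he : ∀ k l, star (e k) ⬝ᵥ e l = if k = l then (1 : ℂ) else 0)
    (hξdec : ξ = ∑ k, (p k : ℂ) • Matrix.vecMulVec (e k) (star (e k)))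
    (p' : Fin dE → ℝ) (e' : Fin dE → Fin dE → ℂ)
    (hp' : ∀ j, 0 ≤ p' j)
    (he' : ∀ j l, star (e' j) ⬝ᵥ e' l = if j = l then (1 : ℂ) else 0)
    (hξ'dec : ξ' = ∑ j, (p' j : ℂ) • Matrix.vecMulVec (e' j) (star (e' j)))
    -- positive (semi)definite square roots of γ and γ'
    (sγ sγ' : Matrix (Fin dS) (Fin dS) ℂ)
    (hsγ : sγ.PosDef) (hsγsq : sγ * sγ = γ)
    (hsγ' : sγ'.PosSemidef) (hsγ'sq : sγ' * sγ' = γ') :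
    γ' = ptraceE (U * (γ ⊗ₖ ξ) * Uᴴ) ∧
    ξ'.PosDef ∧
    ∀ j k, (Real.sqrt (p k) : ℂ) • (sγ * partialElt U e e' j k) =
      (Real.sqrt (p' j) : ℂ) • (partialElt U e e' j k * sγ') := by
  have hUHU : Uᴴ * U = 1 := mem_unitaryGroup_iff'.mp hU
  have hcomm : (γ ⊗ₖ ξ) * Uᴴ = Uᴴ * (γ' ⊗ₖ ξ') := by
    rw [← hprod, ← Matrix.mul_assoc, ← Matrix.mul_assoc, hUHU, Matrix.one_mul]
  refine ⟨by rw [hprod, ptraceE_kronecker, hξ'tr, one_smul], ?_, fun j k => ?_⟩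
  · have : Nonempty (Fin dS) := (isEmpty_or_nonempty _).resolve_left fun _ => by
      simp [trace_eq_zero_of_isEmpty] at hγtr
    refine hξ'.posDef_iff_isUnit.mpr (isUnit_of_isUnit_kronecker_right (A := γ') ?_)
    have hUunit : IsUnit U := Unitary.isUnit_coe (U := ⟨U, hU⟩)
    rw [← hprod]
    exact (hUunit.mul (hγ.kronecker hξ).isUnit).mul hUunit.star
  · have hkey := partialElt_intertwines hγ.isHermitian hξ.isHermitian hcomm
      (hξdec ▸ sum_smul_vecMulVec_mulVec_of_orthonormal _ he k)
      (hξ'dec ▸ sum_smul_vecMulVec_mulVec_of_orthonormal _ he' j)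
    have hS := hsγ.posSemidef.smul (Complex.zero_le_real.mpr (Real.sqrt_nonneg (p k)))
    have hT := hsγ'.smul (Complex.zero_le_real.mpr (Real.sqrt_nonneg (p' j)))
    simpa only [Matrix.smul_mul, Matrix.mul_smul] using hS.mul_eq_mul_of_mul_self_mul_eq hT
      (by rw [ofReal_sqrt_smul_mul_self (hp k), ofReal_sqrt_smul_mul_self (hp' j), hsγsq, hsγ'sq]
          exact hkey)

/-- Product preservation: if `U (γ⊗ξ) U† = γ'⊗ξ'` with `γ, ξ` full-rank densities, then
`γ'` is the reduced state, `ξ'` is full rank, and the square-root intertwining identity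
`√p_k √γ ⟨e_k|U†|e'_j⟩ = √p'_j ⟨e_k|U†|e'_j⟩ √γ'` holds for all `j, k`. -/
theorem product_preservation_intertwining {dS dE : ℕ}
    (U : Matrix (Fin dS × Fin dE) (Fin dS × Fin dE) ℂ)
    (hU : U ∈ Matrix.unitaryGroup (Fin dS × Fin dE) ℂ)
    (γ γ' : Matrix (Fin dS) (Fin dS) ℂ) (ξ ξ' : Matrix (Fin dE) (Fin dE) ℂ)
    (hγ : γ.PosDef) (hγtr : γ.trace = 1)
    (hξ : ξ.PosDef) (hξtr : ξ.trace = 1)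
    (hγ' : γ'.PosSemidef) (hγ'tr : γ'.trace = 1)
    (hξ' : ξ'.PosSemidef) (hξ'tr : ξ'.trace = 1)
    (hprod : U * (γ ⊗ₖ ξ) * Uᴴ = γ' ⊗ₖ ξ')
    -- spectral decompositions of ξ and ξ'
    (p : Fin dE → ℝ) (e : Fin dE → Fin dE → ℂ)
    (hp : ∀ k, 0 ≤ p k)
    (he : ∀ k l, star (e k) ⬝ᵥ e l = if k = l then (1 : ℂ) else 0)
    (hξdec : ξ = ∑ k, (p k : ℂ) • Matrix.vecMulVec (e k) (star (e k)))
    (p' : Fin dE → ℝ) (e' : Fin dE → Fin dE → ℂ)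
    (hp' : ∀ j, 0 ≤ p' j)
    (he' : ∀ j l, star (e' j) ⬝ᵥ e' l = if j = l then (1 : ℂ) else 0)
    (hξ'dec : ξ' = ∑ j, (p' j : ℂ) • Matrix.vecMulVec (e' j) (star (e' j)))
    -- positive (semi)definite square roots of γ and γ'
    (sγ sγ' : Matrix (Fin dS) (Fin dS) ℂ)
    (hsγ : sγ.PosDef) (hsγsq : sγ * sγ = γ)
    (hsγ' : sγ'.PosSemidef) (hsγ'sq : sγ' * sγ' = γ') :
    γ' = ptraceE (U * (γ ⊗ₖ ξ) * Uᴴ) ∧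
    ξ'.PosDef ∧
    ∀ j k, (Real.sqrt (p k) : ℂ) • (sγ * partialElt U e e' j k) =
      (Real.sqrt (p' j) : ℂ) • (partialElt U e e' j k * sγ') :=
  product_preservation_intertwining_general U hU γ γ' ξ ξ' hγ hγtr hξ hξ' hξ'tr hprod p e hp he
    hξdec p' e' hp' he' hξ'dec sγ sγ' hsγ hsγsq hsγ' hsγ'sq
end

section
/- Product preservation implies tabletop reversibility: if U(γ⊗ξ)U† = γ'⊗ξ' with γ, ξ, γ', ξ' density matrices and γ, γ' full rank, where γ' = N(γ) for the channel N(ρ) = Tr_E(U(ρ⊗ξ)U†), then the Petz recovery map N̂_γ(X) = γ^{1/2} N†(γ'^{-1/2} X γ'^{-1/2}) γ^{1/2} equals the tabletop reverse map N̂^T(X) = Tr_E(U†(X⊗ξ')U). -/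
open scoped ComplexOrder
open Matrix BigOperators Kronecker

/-!
Unitary conjugation commutes with the positive square root, so product preservation gives
`U (γ⊗ξ)^{1/2} Uᴴ = γ'^{1/2} ⊗ ξ'^{1/2}`. Writing `X = γ'^{1/2} Z γ'^{1/2}`, the tabletop map
becomes `Tr_E((γ⊗ξ)^{1/2} Uᴴ(Z⊗1)U (γ⊗ξ)^{1/2})`. Factors `1⊗B` may be cycled inside `Tr_E`, so
the two copies of `ξ^{1/2}` merge into one `1⊗ξ` and this equals
`γ^{1/2} Tr_E(Uᴴ(Z⊗1)U(1⊗ξ)) γ^{1/2}`, which is the Petz map because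
`N†(Z) = Tr_E(Uᴴ(Z⊗1)U(1⊗ξ))`.
-/

section PositiveSquareRoot

open scoped MatrixOrder

variable {n 𝕜 : Type*} [Fintype n] [DecidableEq n] [RCLike 𝕜]

lemma Matrix.PosSemidef.exists_mul_self_eq {A : Matrix n n 𝕜} (hA : A.PosSemidef) :
    ∃ B : Matrix n n 𝕜, B.PosSemidef ∧ B * B = A :=
  ⟨CFC.sqrt A, (CFC.sqrt_nonneg A).posSemidef, CFC.sqrt_mul_sqrt_self A hA.nonneg⟩

lemma conj_eq_of_conj_mul_self_eq {U S T : Matrix n n 𝕜} (hU : Uᴴ * U = 1)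
    (hS : S.PosSemidef) (hT : T.PosSemidef) (h : U * (S * S) * Uᴴ = T * T) :
    U * S * Uᴴ = T := by
  refine (CFC.mul_self_eq_mul_self_iff _ _ (hS.mul_mul_conjTranspose_same U).nonneg
    hT.nonneg).mp ?_
  rw [← h]
  calc U * S * Uᴴ * (U * S * Uᴴ) = U * S * (Uᴴ * U) * S * Uᴴ := by simp only [Matrix.mul_assoc]
    _ = U * (S * S) * Uᴴ := by rw [hU, Matrix.mul_one]; simp only [Matrix.mul_assoc]

end PositiveSquareRoot

section PartialTrace

variable {dS dE : ℕ}

lemma ptraceE_conjTranspose (M : Matrix (Fin dS × Fin dE) (Fin dS × Fin dE) ℂ) :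
    ptraceE Mᴴ = (ptraceE M)ᴴ := by
  ext i j
  simp [ptraceE]

lemma trace_ptraceE (M : Matrix (Fin dS × Fin dE) (Fin dS × Fin dE) ℂ) :
    (ptraceE M).trace = M.trace := by
  simp [ptraceE, Matrix.trace, Fintype.sum_prod_type]

lemma ptraceE_kronecker_one_mul (A : Matrix (Fin dS) (Fin dS) ℂ)
    (M : Matrix (Fin dS × Fin dE) (Fin dS × Fin dE) ℂ) :
    ptraceE ((A ⊗ₖ 1) * M) = A * ptraceE M := by
  ext i j
  simp only [ptraceE, mul_apply, kroneckerMap_apply, one_apply, mul_ite, mul_one, mul_zero,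
    ite_mul, zero_mul, Fintype.sum_prod_type, Finset.sum_ite_eq, Finset.mem_univ, ↓reduceIte,
    of_apply, Finset.mul_sum]
  exact Finset.sum_comm

lemma ptraceE_mul_kronecker_one (M : Matrix (Fin dS × Fin dE) (Fin dS × Fin dE) ℂ)
    (A : Matrix (Fin dS) (Fin dS) ℂ) :
    ptraceE (M * (A ⊗ₖ 1)) = ptraceE M * A := by
  ext i j
  simp only [ptraceE, mul_apply, kroneckerMap_apply, one_apply, mul_ite, mul_one, mul_zero,
    Fintype.sum_prod_type, Finset.sum_ite_eq', Finset.mem_univ, ↓reduceIte, of_apply,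
    Finset.sum_mul]
  exact Finset.sum_comm

lemma ptraceE_one_kronecker_mul_comm (B : Matrix (Fin dE) (Fin dE) ℂ)
    (M : Matrix (Fin dS × Fin dE) (Fin dS × Fin dE) ℂ) :
    ptraceE ((1 ⊗ₖ B) * M) = ptraceE (M * (1 ⊗ₖ B)) := by
  ext i j
  simp only [ptraceE, mul_apply, kroneckerMap_apply, one_apply, ite_mul, one_mul, zero_mul,
    Fintype.sum_prod_type, Finset.sum_ite_irrel, Finset.sum_const_zero, Finset.sum_ite_eq,
    Finset.mem_univ, ↓reduceIte, of_apply, mul_ite, mul_zero, Finset.sum_ite_eq']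
  rw [Finset.sum_comm]
  simp_rw [mul_comm]

lemma trace_mul_ptraceE (A : Matrix (Fin dS) (Fin dS) ℂ)
    (M : Matrix (Fin dS × Fin dE) (Fin dS × Fin dE) ℂ) :
    (A * ptraceE M).trace = ((A ⊗ₖ 1) * M).trace := by
  rw [← ptraceE_kronecker_one_mul, trace_ptraceE]

lemma ptraceE_kronecker_mul_mul_kronecker (A C : Matrix (Fin dS) (Fin dS) ℂ)
    (B D : Matrix (Fin dE) (Fin dE) ℂ) (M : Matrix (Fin dS × Fin dE) (Fin dS × Fin dE) ℂ) :
    ptraceE ((A ⊗ₖ B) * M * (C ⊗ₖ D)) = A * ptraceE (M * (1 ⊗ₖ (D * B))) * C := by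
  have hAB : A ⊗ₖ B = (A ⊗ₖ 1) * (1 ⊗ₖ B) := by rw [← mul_kronecker_mul, mul_one, one_mul]
  have hCDB : C ⊗ₖ (D * B) = (1 ⊗ₖ (D * B)) * (C ⊗ₖ 1) := by
    rw [← mul_kronecker_mul, mul_one, one_mul]
  rw [hAB, Matrix.mul_assoc, Matrix.mul_assoc, ptraceE_kronecker_one_mul, Matrix.mul_assoc,
    ptraceE_one_kronecker_mul_comm, Matrix.mul_assoc, ← mul_kronecker_mul, Matrix.mul_one, hCDB,
    ← Matrix.mul_assoc, ptraceE_mul_kronecker_one]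

lemma eq_ptraceE_of_trace_adjoint {U : Matrix (Fin dS × Fin dE) (Fin dS × Fin dE) ℂ}
    {ξ : Matrix (Fin dE) (Fin dE) ℂ} (hξ : ξ.IsHermitian)
    {Nadj : Matrix (Fin dS) (Fin dS) ℂ → Matrix (Fin dS) (Fin dS) ℂ}
    (hadj : ∀ X Y, (Xᴴ * ptraceE (U * (Y ⊗ₖ ξ) * Uᴴ)).trace = ((Nadj X)ᴴ * Y).trace)
    (X : Matrix (Fin dS) (Fin dS) ℂ) :
    Nadj X = ptraceE (Uᴴ * (X ⊗ₖ 1) * U * (1 ⊗ₖ ξ)) := by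
  refine conjTranspose_inj.mp (ext_iff_trace_mul_right.mpr fun Y => ?_)
  exact calc ((Nadj X)ᴴ * Y).trace = (Xᴴ * ptraceE (U * (Y ⊗ₖ ξ) * Uᴴ)).trace := (hadj X Y).symm
    _ = (Uᴴ * ((Xᴴ ⊗ₖ 1) * U) * (Y ⊗ₖ ξ)).trace := by
      rw [trace_mul_ptraceE, ← trace_mul_cycle]
      simp only [Matrix.mul_assoc]
    _ = (Y * ptraceE ((1 ⊗ₖ ξ) * Uᴴ * (Xᴴ ⊗ₖ 1) * U)).trace := by
      rw [trace_mul_comm, trace_mul_ptraceE, ← Matrix.mul_one Y, ← Matrix.one_mul ξ,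
        mul_kronecker_mul]
      simp only [Matrix.mul_assoc, Matrix.mul_one, Matrix.one_mul]
    _ = ((ptraceE (Uᴴ * (X ⊗ₖ 1) * U * (1 ⊗ₖ ξ)))ᴴ * Y).trace := by
      rw [trace_mul_comm, ← ptraceE_conjTranspose]
      simp only [conjTranspose_mul, conjTranspose_kronecker, conjTranspose_one,
        conjTranspose_conjTranspose, hξ.eq, Matrix.mul_assoc]

end PartialTrace

theorem product_preservation_implies_TTR_general {dS dE : ℕ}
    (U : Matrix (Fin dS × Fin dE) (Fin dS × Fin dE) ℂ)
    (hU : U ∈ Matrix.unitaryGroup (Fin dS × Fin dE) ℂ)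
    (γ γ' : Matrix (Fin dS) (Fin dS) ℂ) (ξ ξ' : Matrix (Fin dE) (Fin dE) ℂ)
    (hξ : ξ.PosDef)
    (hξ' : ξ'.PosSemidef)
    (hprod : U * (γ ⊗ₖ ξ) * Uᴴ = γ' ⊗ₖ ξ')
    (Nadj : Matrix (Fin dS) (Fin dS) ℂ → Matrix (Fin dS) (Fin dS) ℂ)
    (hadj : ∀ X Y, (Xᴴ * ptraceE (U * (Y ⊗ₖ ξ) * Uᴴ)).trace = ((Nadj X)ᴴ * Y).trace)
    (sγ r : Matrix (Fin dS) (Fin dS) ℂ)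
    (hsγ : sγ.PosDef) (hsγsq : sγ * sγ = γ)
    (hr : r.PosDef) (hrsq : r * r = γ') :
    ∀ X : Matrix (Fin dS) (Fin dS) ℂ,
      sγ * Nadj (r⁻¹ * X * r⁻¹) * sγ = ptraceE (Uᴴ * (X ⊗ₖ ξ') * U) := by
  intro X
  have hUU : Uᴴ * U = 1 := mem_unitaryGroup_iff'.mp hU
  obtain ⟨sξ, hsξ, hsξsq⟩ := hξ.posSemidef.exists_mul_self_eq
  obtain ⟨sξ', hsξ', hsξ'sq⟩ := hξ'.exists_mul_self_eq
  have hsqrt : U * (sγ ⊗ₖ sξ) * Uᴴ = r ⊗ₖ sξ' :=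
    conj_eq_of_conj_mul_self_eq hUU (hsγ.posSemidef.kronecker hsξ) (hr.posSemidef.kronecker hsξ')
      (by rw [← mul_kronecker_mul, ← mul_kronecker_mul, hsγsq, hsξsq, hrsq, hsξ'sq, hprod])
  have hr_det : IsUnit r.det := (isUnit_iff_isUnit_det r).mp hr.isUnit
  have hX : X ⊗ₖ ξ' = (r ⊗ₖ sξ') * ((r⁻¹ * X * r⁻¹) ⊗ₖ 1) * (r ⊗ₖ sξ') := by
    rw [← mul_kronecker_mul, ← mul_kronecker_mul, ← Matrix.mul_assoc r,
      nonsing_inv_mul_cancel_right r _ hr_det, mul_nonsing_inv_cancel_left r _ hr_det,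
      Matrix.mul_one, hsξ'sq]
  calc sγ * Nadj (r⁻¹ * X * r⁻¹) * sγ
      = sγ * ptraceE (Uᴴ * ((r⁻¹ * X * r⁻¹) ⊗ₖ 1) * U * (1 ⊗ₖ ξ)) * sγ := by
        rw [eq_ptraceE_of_trace_adjoint hξ.isHermitian hadj]
    _ = ptraceE ((sγ ⊗ₖ sξ) * (Uᴴ * ((r⁻¹ * X * r⁻¹) ⊗ₖ 1) * U) * (sγ ⊗ₖ sξ)) := by
        rw [ptraceE_kronecker_mul_mul_kronecker, hsξsq]
    _ = ptraceE (Uᴴ * (X ⊗ₖ ξ') * U) := by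
        rw [hX, ← hsqrt]
        simp only [Matrix.mul_assoc, hUU, Matrix.mul_one, ← Matrix.mul_assoc Uᴴ U, Matrix.one_mul]

/-- Product preservation implies tabletop reversibility: if `U (γ⊗ξ) U† = γ'⊗ξ'` with
`γ' = N(γ)` for the channel `N(ρ) = Tr_E(U(ρ⊗ξ)U†)`, then the Petz recovery map
`X ↦ γ^{1/2} N†(γ'^{-1/2} X γ'^{-1/2}) γ^{1/2}` equals the tabletop reverse map
`X ↦ Tr_E(U†(X⊗ξ')U)`.  Here `Nadj` is the Hilbert–Schmidt adjoint of `N`,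
`sγ` is the positive square root of `γ` and `r` that of `γ'`. -/
theorem product_preservation_implies_TTR {dS dE : ℕ}
    (U : Matrix (Fin dS × Fin dE) (Fin dS × Fin dE) ℂ)
    (hU : U ∈ Matrix.unitaryGroup (Fin dS × Fin dE) ℂ)
    (γ γ' : Matrix (Fin dS) (Fin dS) ℂ) (ξ ξ' : Matrix (Fin dE) (Fin dE) ℂ)
    (hγ : γ.PosDef) (hγtr : γ.trace = 1)
    (hξ : ξ.PosDef) (hξtr : ξ.trace = 1)
    (hγ'def : γ' = ptraceE (U * (γ ⊗ₖ ξ) * Uᴴ))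
    (hγ' : γ'.PosDef)
    (hξ' : ξ'.PosSemidef) (hξ'tr : ξ'.trace = 1)
    (hprod : U * (γ ⊗ₖ ξ) * Uᴴ = γ' ⊗ₖ ξ')
    (Nadj : Matrix (Fin dS) (Fin dS) ℂ → Matrix (Fin dS) (Fin dS) ℂ)
    (hadj : ∀ X Y, (Xᴴ * ptraceE (U * (Y ⊗ₖ ξ) * Uᴴ)).trace = ((Nadj X)ᴴ * Y).trace)
    (sγ r : Matrix (Fin dS) (Fin dS) ℂ)
    (hsγ : sγ.PosDef) (hsγsq : sγ * sγ = γ)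
    (hr : r.PosDef) (hrsq : r * r = γ') :
    ∀ X : Matrix (Fin dS) (Fin dS) ℂ,
      sγ * Nadj (r⁻¹ * X * r⁻¹) * sγ = ptraceE (Uᴴ * (X ⊗ₖ ξ') * U) :=
  product_preservation_implies_TTR_general U hU γ γ' ξ ξ' hξ hξ' hprod Nadj hadj sγ r hsγ hsγsq hr
    hrsq
end

section
/- For a unital quantum channel N with Kraus operators {N_i}, a density matrix γ commutes with every Kraus operator N_i if and only if γ is a fixed point of N, i.e., N(γ) = γ. -/
open scoped ComplexOrder
open Matrix BigOperators

lemma sum_trace_conjTranspose_mul_self_eq_zero' {d m : ℕ}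
    (A : Fin m → Matrix (Fin d) (Fin d) ℂ)
    (h : ∑ i, ((A i)ᴴ * (A i)).trace = 0) : ∀ i, A i = 0 := by
  have he : ∀ i, ((A i)ᴴ * (A i)).trace
      = ((∑ j, ∑ k, Complex.normSq (A i k j) : ℝ) : ℂ) := by
    intro i
    simp only [Matrix.trace, Matrix.diag, Matrix.mul_apply,
      Matrix.conjTranspose_apply]
    push_cast
    refine Finset.sum_congr rfl fun j _ => Finset.sum_congr rfl fun k _ => ?_
    rw [Complex.normSq_eq_conj_mul_self]
    rfl
  rw [Finset.sum_congr rfl fun i _ => he i] at h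
  push_cast at h
  have h' : ∑ i, ∑ j, ∑ k, Complex.normSq (A i k j) = 0 := by
    exact_mod_cast h
  have hz : ∀ i ∈ Finset.univ, ∀ j ∈ Finset.univ, ∀ k ∈ Finset.univ,
      Complex.normSq (A i k j) = 0 := by
    have := (Finset.sum_eq_zero_iff_of_nonneg (fun i _ =>
      Finset.sum_nonneg fun j _ => Finset.sum_nonneg fun k _ =>
        Complex.normSq_nonneg _)).mp h'
    intro i hi j hj k hk
    have := (Finset.sum_eq_zero_iff_of_nonneg (fun j _ =>
      Finset.sum_nonneg fun k _ => Complex.normSq_nonneg _)).mp (this i hi) j hj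
    exact (Finset.sum_eq_zero_iff_of_nonneg (fun k _ =>
      Complex.normSq_nonneg _)).mp this k hk
  intro i
  ext k j
  simpa using Complex.normSq_eq_zero.mp (hz i (by simp) j (by simp) k (by simp))

/-- For a unital quantum channel `N(ρ) = Σ_i K_i ρ K_i†`, a density matrix `γ` commutes
with every Kraus operator iff it is a fixed point of `N`. -/
theorem commutes_with_kraus_iff_fixed {d m : ℕ}
    (K : Fin m → Matrix (Fin d) (Fin d) ℂ)
    (htp : ∑ i, (K i)ᴴ * K i = 1)
    (hunital : ∑ i, K i * (K i)ᴴ = 1)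
    (γ : Matrix (Fin d) (Fin d) ℂ)
    (hγ : γ.PosSemidef) (hγtr : γ.trace = 1) :
    (∀ i, γ * K i = K i * γ) ↔ ∑ i, K i * γ * (K i)ᴴ = γ := by
  constructor
  · intro h
    have : ∀ i : Fin m, K i * γ * (K i)ᴴ = γ * (K i * (K i)ᴴ) := by
      intro i
      rw [← h i, mul_assoc]
    rw [Finset.sum_congr rfl fun i _ => this i, ← Finset.mul_sum, hunital, mul_one]
  · intro hfix
    have hH : γᴴ = γ := hγ.isHermitian
    have t1 : ∀ i : Fin m, (γ * (K i)ᴴ * (K i * γ)).trace = (γ * γ * ((K i)ᴴ * K i)).trace := by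
      intro i
      rw [show γ * (K i)ᴴ * (K i * γ) = (γ * (K i)ᴴ * K i) * γ by noncomm_ring, trace_mul_comm,
        show γ * (γ * (K i)ᴴ * K i) = γ * γ * ((K i)ᴴ * K i) by noncomm_ring]
    have t2 : ∀ i : Fin m, (γ * (K i)ᴴ * (γ * K i)).trace = (K i * γ * (K i)ᴴ * γ).trace := by
      intro i
      rw [show γ * (K i)ᴴ * (γ * K i) = (γ * (K i)ᴴ * γ) * K i by noncomm_ring, trace_mul_comm,
        show K i * (γ * (K i)ᴴ * γ) = K i * γ * (K i)ᴴ * γ by noncomm_ring]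
    have t3 : ∀ i : Fin m, ((K i)ᴴ * γ * (K i * γ)).trace = (K i * γ * (K i)ᴴ * γ).trace := by
      intro i
      rw [show (K i)ᴴ * γ * (K i * γ) = (K i)ᴴ * (γ * K i * γ) by noncomm_ring, trace_mul_comm,
        show γ * K i * γ * (K i)ᴴ = γ * (K i * γ * (K i)ᴴ) by noncomm_ring, trace_mul_comm]
    have t4 : ∀ i : Fin m, ((K i)ᴴ * γ * (γ * K i)).trace = (γ * γ * (K i * (K i)ᴴ)).trace := by
      intro i
      rw [show (K i)ᴴ * γ * (γ * K i) = (K i)ᴴ * (γ * γ * K i) by noncomm_ring, trace_mul_comm,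
        show γ * γ * K i * (K i)ᴴ = γ * γ * (K i * (K i)ᴴ) by noncomm_ring]
    have e : ∀ i : Fin m, (((K i * γ - γ * K i))ᴴ * (K i * γ - γ * K i)).trace
        = (γ * γ * ((K i)ᴴ * K i)).trace - (K i * γ * (K i)ᴴ * γ).trace
          - (K i * γ * (K i)ᴴ * γ).trace + (γ * γ * (K i * (K i)ᴴ)).trace := by
      intro i
      rw [conjTranspose_sub, conjTranspose_mul, conjTranspose_mul, hH,
        sub_mul, mul_sub, mul_sub, trace_sub, trace_sub, trace_sub,
        t1 i, t2 i, t3 i, t4 i]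
      ring
    have key : ∑ i, (((K i * γ - γ * K i))ᴴ * (K i * γ - γ * K i)).trace = 0 := by
      simp only [e]
      have s1 : ∑ i : Fin m, (γ * γ * ((K i)ᴴ * K i)).trace = (γ * γ).trace := by
        rw [← trace_sum, ← Finset.mul_sum, htp, mul_one]
      have s2 : ∑ i : Fin m, (K i * γ * (K i)ᴴ * γ).trace = (γ * γ).trace := by
        rw [← trace_sum, ← Finset.sum_mul, hfix]
      have s4 : ∑ i : Fin m, (γ * γ * (K i * (K i)ᴴ)).trace = (γ * γ).trace := by
        rw [← trace_sum, ← Finset.mul_sum, hunital, mul_one]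
      rw [Finset.sum_add_distrib, Finset.sum_sub_distrib, Finset.sum_sub_distrib, s1, s2, s4]
      ring
    have hz := sum_trace_conjTranspose_mul_self_eq_zero' (fun i => K i * γ - γ * K i) key
    intro i
    have := hz i
    have := sub_eq_zero.mp this
    exact this.symm
end

section
/- Let N(ρ) = Tr_E(U(ρ⊗ξ)U†) be a channel with full-rank prior γ such that γ' = N(γ) is full rank, and fix spectral decompositions γ = Σ_n r_n |λ_n⟩⟨λ_n|, γ' = Σ_m r'_m |λ'_m⟩⟨λ'_m|, ξ = Σ_k p_k |e_k⟩⟨e_k|, ξ' = Σ_j p'_j |e'_j⟩⟨e'_j|. Define the transition amplitudes Φ_{mj←nk} = (⟨λ'_m|⊗⟨e'_j|) U (|λ_n⟩⊗|e_k⟩). Then the Petz recovery map N̂_γ^P equals the tabletop reverse map N̂^T_{ξ'}(X) = Tr_E(U†(X⊗ξ')U) if and only if for all indices m₁, m₂, n₁, n₂: Σ_{j,k} (p_k √(r_{n₁} r_{n₂}) − p'_j √(r'_{m₁} r'_{m₂})) Φ_{m₁j←n₁k} Φ*_{m₂j←n₂k} = 0. -/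
/-!
Both maps are linear, so they coincide iff they agree on the matrix units
`|λ'_{m₁}⟩⟨λ'_{m₂}|`, and two outputs coincide iff their matrix elements `⟨λ_{n₁}|·|λ_{n₂}⟩` do.
In the eigenbases of `γ, γ', ξ, ξ'` the square roots and the inverse are diagonal, and both
matrix elements are sums over the amplitudes `Φ`: the tabletop map gives
`Σ_{j,k} p'_j Φ*_{m₁j←n₁k} Φ_{m₂j←n₂k}`, while the Petz map, through the adjoint relation, gives
`√(r_{n₁} r_{n₂} / (r'_{m₁} r'_{m₂})) · Σ_{j,k} p_k Φ*_{m₁j←n₁k} Φ_{m₂j←n₂k}`.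
Clearing the denominator and conjugating turns their equality into the stated criterion.
-/

open scoped ComplexOrder
open Matrix BigOperators Kronecker

/-- Transition amplitude `Φ_{mj←nk} = (⟨λ'_m|⊗⟨e'_j|) U (|λ_n⟩⊗|e_k⟩)`. -/
noncomputable def transAmp {dS dE : ℕ}
    (U : Matrix (Fin dS × Fin dE) (Fin dS × Fin dE) ℂ)
    (w : Fin dS → Fin dS → ℂ) (e' : Fin dE → Fin dE → ℂ)
    (v : Fin dS → Fin dS → ℂ) (e : Fin dE → Fin dE → ℂ)
    (m : Fin dS) (j : Fin dE) (n : Fin dS) (k : Fin dE) : ℂ :=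
  ∑ a, ∑ x, ∑ b, ∑ y,
    (starRingEnd ℂ) (w m a) * (starRingEnd ℂ) (e' j x) * U (a, x) (b, y) * v n b * e k y

namespace Matrix

variable {m n : Type*} [Fintype m] [Fintype n] [DecidableEq m] [DecidableEq n]

section Frame

def frame (v : n → n → ℂ) : Matrix n n ℂ := (of v)ᵀ

theorem frame_mem_unitaryGroup {v : n → n → ℂ}
    (hv : ∀ i j, star (v i) ⬝ᵥ v j = if i = j then 1 else 0) :
    frame v ∈ unitaryGroup n ℂ := by
  rw [mem_unitaryGroup_iff']
  ext i j
  simpa [frame, mul_apply, dotProduct, one_apply] using hv i j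

theorem sum_smul_vecMulVec_eq_frame_mul_diagonal (v : n → n → ℂ) (c : n → ℂ) :
    ∑ i, c i • vecMulVec (v i) (star (v i)) = frame v * diagonal c * (frame v)ᴴ := by
  ext a b
  rw [mul_apply]
  simp [frame, mul_diagonal, vecMulVec_apply, Matrix.sum_apply, mul_left_comm, mul_assoc]

end Frame

section Unitary

variable {Q : Matrix n n ℂ}

theorem mul_mul_conjTranspose_mul_mul (hQ : Q ∈ unitaryGroup n ℂ) (A B : Matrix n n ℂ) :
    Q * A * Qᴴ * (Q * B * Qᴴ) = Q * (A * B) * Qᴴ := by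
  have hQ' : Qᴴ * Q = 1 := Unitary.star_mul_self_of_mem hQ
  simp only [Matrix.mul_assoc, ← Matrix.mul_assoc Qᴴ Q, hQ', Matrix.one_mul]

theorem mul_conjTranspose_mul_mul_mul_conjTranspose (hQ : Q ∈ unitaryGroup n ℂ)
    (A : Matrix n n ℂ) : Q * (Qᴴ * A * Q) * Qᴴ = A := by
  have hQ' : Q * Qᴴ = 1 := Unitary.mul_star_self_of_mem hQ
  simp only [Matrix.mul_assoc, hQ', Matrix.mul_one, ← Matrix.mul_assoc Q Qᴴ, Matrix.one_mul]

theorem conj_diagonal_inv (hQ : Q ∈ unitaryGroup n ℂ) {c : n → ℂ} (hc : ∀ i, c i ≠ 0) :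
    (Q * diagonal c * Qᴴ)⁻¹ = Q * diagonal (fun i => (c i)⁻¹) * Qᴴ := by
  refine inv_eq_left_inv ?_
  rw [mul_mul_conjTranspose_mul_mul hQ, diagonal_mul_diagonal]
  simp only [inv_mul_cancel₀ (hc _), diagonal_one, Matrix.mul_one]
  exact Unitary.mul_star_self_of_mem hQ

open scoped MatrixOrder in
theorem eq_conj_diagonal_sqrt (hQ : Q ∈ unitaryGroup n ℂ) {S : Matrix n n ℂ} (hS : S.PosSemidef)
    {d : n → ℝ} (hd : ∀ i, 0 ≤ d i) (hSS : S * S = Q * diagonal (fun i => (d i : ℂ)) * Qᴴ) :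
    S = Q * diagonal (fun i => (√(d i) : ℂ)) * Qᴴ := by
  have hroot : (Q * diagonal (fun i => (√(d i) : ℂ)) * Qᴴ).PosSemidef :=
    (posSemidef_diagonal_iff.mpr fun i => by simp).mul_mul_conjTranspose_same Q
  rw [← CFC.mul_self_eq_mul_self_iff S _ hS.nonneg hroot.nonneg, hSS,
    mul_mul_conjTranspose_mul_mul hQ, diagonal_mul_diagonal]
  simp [← Complex.ofReal_mul, Real.mul_self_sqrt (hd _)]

theorem linearMap_eq_iff_forall_conj_single_apply {Q' : Matrix m m ℂ}
    (hQ' : Q' ∈ unitaryGroup m ℂ) (hQ : Q ∈ unitaryGroup n ℂ)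
    {f g : Matrix m m ℂ →ₗ[ℂ] Matrix n n ℂ} :
    f = g ↔ ∀ i j k l, (Qᴴ * f (Q' * single i j 1 * Q'ᴴ) * Q) k l
      = (Qᴴ * g (Q' * single i j 1 * Q'ᴴ) * Q) k l := by
  refine ⟨fun h _ _ _ _ => h ▸ rfl, fun h => ?_⟩
  let conj : Matrix m m ℂ →ₗ[ℂ] Matrix m m ℂ :=
    LinearMap.mulRight ℂ Q'ᴴ ∘ₗ LinearMap.mulLeft ℂ Q'
  have hsingle : ∀ i j, f (Q' * single i j 1 * Q'ᴴ) = g (Q' * single i j 1 * Q'ᴴ) := by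
    intro i j
    rw [← mul_conjTranspose_mul_mul_mul_conjTranspose hQ (f _),
      ← mul_conjTranspose_mul_mul_mul_conjTranspose hQ (g _), ← Matrix.ext_iff.mp (h i j)]
  have hconj : f ∘ₗ conj = g ∘ₗ conj := ext_linearMap (h := fun i j => LinearMap.ext fun c => by
    have hc : single i j c = c • single i j 1 := by rw [smul_single, smul_eq_mul, mul_one]
    simp only [LinearMap.comp_apply, singleLinearMap_apply, conj, LinearMap.mulLeft_apply,
      LinearMap.mulRight_apply, hc, map_smul, hsingle])
  ext1 X
  rw [← mul_conjTranspose_mul_mul_mul_conjTranspose hQ' X]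
  exact LinearMap.congr_fun hconj (Q'ᴴ * X * Q')

end Unitary

section Adjoint

variable {N : Matrix n n ℂ → Matrix m m ℂ} {Nadj : Matrix m m ℂ → Matrix n n ℂ}

theorem trace_conj_single_conjTranspose_mul (C D M : Matrix n n ℂ) (i j : n) :
    ((C * single i j 1 * Dᴴ)ᴴ * M).trace = (Cᴴ * M * D) i j := by
  rw [conjTranspose_mul, conjTranspose_mul, conjTranspose_conjTranspose, conjTranspose_single,
    star_one]
  simp only [Matrix.mul_assoc]
  rw [trace_mul_comm, Matrix.mul_assoc, trace_single_mul, one_smul, Matrix.mul_assoc]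

theorem ext_of_forall_trace_conjTranspose_mul {A B : Matrix n n ℂ}
    (h : ∀ Y, (Aᴴ * Y).trace = (Bᴴ * Y).trace) : A = B := by
  ext i j
  simpa [trace_mul_single] using congrArg star (h (single i j 1))

@[simps]
def adjointLinearMap (hadj : ∀ X Y, (Xᴴ * N Y).trace = ((Nadj X)ᴴ * Y).trace) :
    Matrix m m ℂ →ₗ[ℂ] Matrix n n ℂ where
  toFun := Nadj
  map_add' X X' := ext_of_forall_trace_conjTranspose_mul fun Y => by
    simp only [conjTranspose_add, Matrix.add_mul, trace_add, ← hadj]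
  map_smul' c X := ext_of_forall_trace_conjTranspose_mul fun Y => by
    simp only [conjTranspose_smul, Matrix.smul_mul, trace_smul, ← hadj, RingHom.id_apply]

theorem conjTranspose_mul_adjoint_mul_apply
    (hadj : ∀ X Y, (Xᴴ * N Y).trace = ((Nadj X)ᴴ * Y).trace)
    (A B : Matrix n n ℂ) (C D : Matrix m m ℂ) (i j : n) (k l : m) :
    (Aᴴ * Nadj (C * single k l 1 * Dᴴ) * B) i j
      = star ((Cᴴ * N (A * single i j 1 * Bᴴ) * D) k l) := by
  set Z := C * single k l 1 * Dᴴ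
  set Y := A * single i j 1 * Bᴴ
  rw [← trace_conj_single_conjTranspose_mul C D, hadj, ← trace_conj_single_conjTranspose_mul A B,
    ← trace_conjTranspose, conjTranspose_mul (Nadj Z)ᴴ, conjTranspose_conjTranspose]

end Adjoint

section Petz

theorem diagonal_mul_single_mul_diagonal (b : m → ℂ) (i j : m) :
    diagonal b * single i j 1 * diagonal b = (b i * b j) • single i j 1 := by
  ext k l
  simp only [mul_diagonal, diagonal_mul, single_apply, smul_apply, smul_eq_mul]
  split_ifs with h
  · rw [h.1, h.2]; ring
  · simp

/-- With `s = γ^{1/2}`, `r = γ'^{1/2}` and `Nadj = N†` this is the Petz map `N̂^P_γ`. -/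
noncomputable def petzMap (Nadj : Matrix m m ℂ →ₗ[ℂ] Matrix n n ℂ) (s : Matrix n n ℂ)
    (r : Matrix m m ℂ) : Matrix m m ℂ →ₗ[ℂ] Matrix n n ℂ :=
  LinearMap.mulRight ℂ s ∘ₗ LinearMap.mulLeft ℂ s ∘ₗ Nadj ∘ₗ
    LinearMap.mulRight ℂ r⁻¹ ∘ₗ LinearMap.mulLeft ℂ r⁻¹

theorem conjTranspose_mul_petzMap_mul_apply {N : Matrix n n ℂ → Matrix m m ℂ}
    {Nadj : Matrix m m ℂ → Matrix n n ℂ} (hadj : ∀ X Y, (Xᴴ * N Y).trace = ((Nadj X)ᴴ * Y).trace)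
    {Qv : Matrix n n ℂ} (hQv : Qv ∈ unitaryGroup n ℂ) {Qw : Matrix m m ℂ}
    (hQw : Qw ∈ unitaryGroup m ℂ) (a : n → ℂ) {b : m → ℂ} (hb : ∀ i, b i ≠ 0) (i j : m)
    (k l : n) :
    (Qvᴴ * petzMap (adjointLinearMap hadj) (Qv * diagonal a * Qvᴴ) (Qw * diagonal b * Qwᴴ)
        (Qw * single i j 1 * Qwᴴ) * Qv) k l
      = a k * a l * ((b i)⁻¹ * (b j)⁻¹) * star ((Qwᴴ * N (Qv * single k l 1 * Qvᴴ) * Qw) i j) := by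
  have hQv' : Qvᴴ * Qv = 1 := Unitary.star_mul_self_of_mem hQv
  simp only [petzMap, LinearMap.comp_apply, LinearMap.mulLeft_apply, LinearMap.mulRight_apply]
  rw [conj_diagonal_inv hQw hb, mul_mul_conjTranspose_mul_mul hQw,
    mul_mul_conjTranspose_mul_mul hQw, diagonal_mul_single_mul_diagonal, Matrix.mul_smul,
    Matrix.smul_mul, map_smul, adjointLinearMap_apply,
    ← conjTranspose_mul_adjoint_mul_apply hadj]
  simp only [Matrix.mul_assoc, ← Matrix.mul_assoc Qvᴴ Qv, hQv', Matrix.one_mul, Matrix.mul_one]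
  simp only [← Matrix.mul_assoc, diagonal_mul, mul_diagonal, Matrix.mul_smul, Matrix.smul_mul,
    smul_apply, smul_eq_mul]
  ring

end Petz

end Matrix

theorem ofReal_div_mul_star_eq_iff {c d : ℝ} (hd : d ≠ 0) {X Y : ℂ} :
    (c / d : ℂ) * star X = Y ↔ (c : ℂ) * X - d * star Y = 0 := by
  have hd' : (d : ℂ) ≠ 0 := Complex.ofReal_ne_zero.mpr hd
  have hstar : star ((c / d : ℂ) * star X) = (c / d : ℂ) * X := by
    simp [Complex.conj_ofReal]
  constructor
  · rintro rfl
    rw [hstar]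
    field_simp
    ring
  · intro h
    apply star_injective
    rw [hstar]
    field_simp
    linear_combination h

theorem sqrt_mul_star_sum_eq_sum_iff {ι κ : Type*} [Fintype ι] [Fintype κ] {a₁ a₂ b₁ b₂ : ℝ}
    (ha₁ : 0 ≤ a₁) (hb₁ : 0 < b₁) (hb₂ : 0 < b₂) (p : κ → ℝ) (p' : ι → ℝ) (x y : ι → κ → ℂ) :
    (√a₁ : ℂ) * √a₂ * ((√b₁ : ℂ)⁻¹ * (√b₂ : ℂ)⁻¹) *
        star (∑ j, ∑ k, x j k * p k * star (y j k)) = ∑ j, ∑ k, star (x j k) * p' j * y j k ↔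
      ∑ j, ∑ k, ((p k * √(a₁ * a₂) - p' j * √(b₁ * b₂) : ℝ) : ℂ) * x j k * star (y j k) = 0 := by
  have hfactor : (√a₁ : ℂ) * √a₂ * ((√b₁ : ℂ)⁻¹ * (√b₂ : ℂ)⁻¹)
      = ((√(a₁ * a₂) : ℝ) : ℂ) / ((√(b₁ * b₂) : ℝ) : ℂ) := by
    rw [Real.sqrt_mul ha₁, Real.sqrt_mul hb₁.le]
    push_cast
    ring
  rw [hfactor, ofReal_div_mul_star_eq_iff (Real.sqrt_pos.mpr (mul_pos hb₁ hb₂)).ne']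
  refine Iff.of_eq (congrArg (· = 0) ?_)
  simp only [star_sum, star_mul', Complex.star_def, Complex.conj_ofReal, Complex.conj_conj,
    Finset.mul_sum, ← Finset.sum_sub_distrib]
  refine Finset.sum_congr rfl fun j _ => Finset.sum_congr rfl fun k _ => ?_
  push_cast
  ring

section PartialTrace

variable {dS dE : ℕ}

theorem conjTranspose_mul_ptraceE_mul (V V' : Matrix (Fin dS) (Fin dS) ℂ)
    {C : Matrix (Fin dE) (Fin dE) ℂ} (hC : C * Cᴴ = 1)
    (M : Matrix (Fin dS × Fin dE) (Fin dS × Fin dE) ℂ) :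
    Vᴴ * ptraceE M * V' = ptraceE ((V ⊗ₖ C)ᴴ * M * (V' ⊗ₖ C)) := by
  have hC' : ∀ x y, ∑ k, star (C x k) * C y k = if y = x then 1 else 0 := fun x y => by
    simpa [mul_apply, one_apply, mul_comm] using congrFun (congrFun hC y) x
  ext i j
  simp only [ptraceE, of_apply, mul_apply, Fintype.sum_prod_type, kronecker_apply,
    conjTranspose_apply, star_mul', Finset.sum_mul, Finset.mul_sum]
  symm
  rw [Finset.sum_comm]
  refine Finset.sum_congr rfl fun b _ => ?_
  calc _ = ∑ y, ∑ a, ∑ x, star (V a i) * M (a, x) (b, y) * V' b j * ∑ k, star (C x k) * C y k := by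
        rw [Finset.sum_comm]
        refine Finset.sum_congr rfl fun y _ => ?_
        rw [Finset.sum_comm]
        refine Finset.sum_congr rfl fun a _ => ?_
        rw [Finset.sum_comm]
        refine Finset.sum_congr rfl fun x _ => ?_
        rw [Finset.mul_sum]
        exact Finset.sum_congr rfl fun k _ => by ring
    _ = _ := by
        simp only [hC', mul_ite, mul_one, mul_zero, Finset.sum_ite_eq, Finset.mem_univ, if_true]
        exact Finset.sum_comm

theorem ptraceE_mul_single_kronecker_diagonal_mul_apply
    (B : Matrix (Fin dS × Fin dE) (Fin dS × Fin dE) ℂ) (q : Fin dE → ℂ) (i j a b : Fin dS) :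
    ptraceE (B * (single i j 1 ⊗ₖ diagonal q) * Bᴴ) a b
      = ∑ k, ∑ x, B (a, k) (i, x) * q x * star (B (b, k) (j, x)) := by
  simp [ptraceE, mul_apply, Fintype.sum_prod_type, single_apply, diagonal_apply, ite_and]

theorem conjTranspose_mul_ptraceE_kronecker_mul_apply
    (A : Matrix (Fin dS × Fin dE) (Fin dS × Fin dE) ℂ) (V₁ V₂ : Matrix (Fin dS) (Fin dS) ℂ)
    {C₁ : Matrix (Fin dE) (Fin dE) ℂ} (hC₁ : C₁ * C₁ᴴ = 1) (C₂ : Matrix (Fin dE) (Fin dE) ℂ)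
    (q : Fin dE → ℂ) (i j a b : Fin dS) :
    (V₁ᴴ * ptraceE (A * ((V₂ * single i j 1 * V₂ᴴ) ⊗ₖ (C₂ * diagonal q * C₂ᴴ)) * Aᴴ) * V₁ :
      Matrix (Fin dS) (Fin dS) ℂ) a b
      = ∑ k, ∑ x, ((V₁ ⊗ₖ C₁)ᴴ * A * (V₂ ⊗ₖ C₂)) (a, k) (i, x) * q x *
          star (((V₁ ⊗ₖ C₁)ᴴ * A * (V₂ ⊗ₖ C₂)) (b, k) (j, x)) := by
  have hK : (V₂ * single i j 1 * V₂ᴴ) ⊗ₖ (C₂ * diagonal q * C₂ᴴ)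
      = (V₂ ⊗ₖ C₂) * (single i j 1 ⊗ₖ diagonal q) * (V₂ ⊗ₖ C₂)ᴴ := by
    rw [conjTranspose_kronecker, mul_kronecker_mul, mul_kronecker_mul]
  rw [conjTranspose_mul_ptraceE_mul V₁ V₁ hC₁, ← ptraceE_mul_single_kronecker_diagonal_mul_apply,
    hK]
  simp only [conjTranspose_mul, conjTranspose_conjTranspose, Matrix.mul_assoc]

/-- The tabletop reverse map `N̂^T_{ξ'}`. -/
@[simps]
noncomputable def tabletopMap (U : Matrix (Fin dS × Fin dE) (Fin dS × Fin dE) ℂ)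
    (ξ' : Matrix (Fin dE) (Fin dE) ℂ) :
    Matrix (Fin dS) (Fin dS) ℂ →ₗ[ℂ] Matrix (Fin dS) (Fin dS) ℂ where
  toFun X := ptraceE (Uᴴ * (X ⊗ₖ ξ') * U)
  map_add' X X' := by
    ext
    simp [ptraceE, add_kronecker, Matrix.mul_add, Matrix.add_mul, Finset.sum_add_distrib]
  map_smul' c X := by
    ext
    simp [ptraceE, smul_kronecker, Finset.mul_sum]

theorem conjTranspose_mul_tabletopMap_mul_apply
    (U : Matrix (Fin dS × Fin dE) (Fin dS × Fin dE) ℂ) (V W : Matrix (Fin dS) (Fin dS) ℂ)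
    {C : Matrix (Fin dE) (Fin dE) ℂ} (hC : C * Cᴴ = 1) (C' : Matrix (Fin dE) (Fin dE) ℂ)
    (q : Fin dE → ℂ) (i j a b : Fin dS) :
    (Vᴴ * tabletopMap U (C' * diagonal q * C'ᴴ) (W * single i j 1 * Wᴴ) * V) a b
      = ∑ x, ∑ k, star (((W ⊗ₖ C')ᴴ * U * (V ⊗ₖ C)) (i, x) (a, k)) * q x *
          ((W ⊗ₖ C')ᴴ * U * (V ⊗ₖ C)) (j, x) (b, k) := by
  have h := conjTranspose_mul_ptraceE_kronecker_mul_apply Uᴴ V W hC C' q i j a b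
  have hΦ : (V ⊗ₖ C)ᴴ * Uᴴ * (W ⊗ₖ C') = ((W ⊗ₖ C')ᴴ * U * (V ⊗ₖ C))ᴴ := by
    simp only [conjTranspose_mul, conjTranspose_conjTranspose, Matrix.mul_assoc]
  rw [conjTranspose_conjTranspose, hΦ] at h
  simp only [tabletopMap_apply, h, conjTranspose_apply, star_star]
  exact Finset.sum_comm

end PartialTrace

theorem transAmp_eq_apply {dS dE : ℕ} (U : Matrix (Fin dS × Fin dE) (Fin dS × Fin dE) ℂ)
    (w : Fin dS → Fin dS → ℂ) (e' : Fin dE → Fin dE → ℂ)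
    (v : Fin dS → Fin dS → ℂ) (e : Fin dE → Fin dE → ℂ) (m : Fin dS) (j : Fin dE) (n : Fin dS)
    (k : Fin dE) :
    transAmp U w e' v e m j n k
      = ((frame w ⊗ₖ frame e')ᴴ * U * (frame v ⊗ₖ frame e)) (m, j) (n, k) := by
  rw [Matrix.mul_assoc]
  simp only [transAmp, mul_apply, Fintype.sum_prod_type, conjTranspose_apply, kronecker_apply,
    frame, transpose_apply, of_apply, Finset.mul_sum, RCLike.star_def, map_mul, mul_assoc]

theorem exact_TTR_iff_general {dS dE : ℕ}
    (U : Matrix (Fin dS × Fin dE) (Fin dS × Fin dE) ℂ)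
    (ξ ξ' : Matrix (Fin dE) (Fin dE) ℂ)
    (γ : Matrix (Fin dS) (Fin dS) ℂ)
    (γ' : Matrix (Fin dS) (Fin dS) ℂ)
    -- spectral decompositions
    (rγ : Fin dS → ℝ) (v : Fin dS → Fin dS → ℂ)
    (hrγ : ∀ n, 0 < rγ n)
    (hv : ∀ n l, star (v n) ⬝ᵥ v l = if n = l then (1 : ℂ) else 0)
    (hγdec : γ = ∑ n, (rγ n : ℂ) • Matrix.vecMulVec (v n) (star (v n)))
    (rγ' : Fin dS → ℝ) (w : Fin dS → Fin dS → ℂ)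
    (hrγ' : ∀ m, 0 < rγ' m)
    (hw : ∀ m l, star (w m) ⬝ᵥ w l = if m = l then (1 : ℂ) else 0)
    (hγ'dec : γ' = ∑ m, (rγ' m : ℂ) • Matrix.vecMulVec (w m) (star (w m)))
    (p : Fin dE → ℝ) (e : Fin dE → Fin dE → ℂ)
    (he : ∀ k l, star (e k) ⬝ᵥ e l = if k = l then (1 : ℂ) else 0)
    (hξdec : ξ = ∑ k, (p k : ℂ) • Matrix.vecMulVec (e k) (star (e k)))
    (p' : Fin dE → ℝ) (e' : Fin dE → Fin dE → ℂ)
    (he' : ∀ j l, star (e' j) ⬝ᵥ e' l = if j = l then (1 : ℂ) else 0)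
    (hξ'dec : ξ' = ∑ j, (p' j : ℂ) • Matrix.vecMulVec (e' j) (star (e' j)))
    -- Hilbert–Schmidt adjoint of the forward channel
    (Nadj : Matrix (Fin dS) (Fin dS) ℂ → Matrix (Fin dS) (Fin dS) ℂ)
    (hadj : ∀ X Y, (Xᴴ * ptraceE (U * (Y ⊗ₖ ξ) * Uᴴ)).trace = ((Nadj X)ᴴ * Y).trace)
    -- positive square roots of γ and γ'
    (s r : Matrix (Fin dS) (Fin dS) ℂ)
    (hs : s.PosDef) (hssq : s * s = γ)
    (hr : r.PosDef) (hrsq : r * r = γ') :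
    (∀ X : Matrix (Fin dS) (Fin dS) ℂ,
        s * Nadj (r⁻¹ * X * r⁻¹) * s = ptraceE (Uᴴ * (X ⊗ₖ ξ') * U)) ↔
    (∀ m₁ m₂ n₁ n₂ : Fin dS,
        ∑ j, ∑ k,
          ((p k * Real.sqrt (rγ n₁ * rγ n₂) - p' j * Real.sqrt (rγ' m₁ * rγ' m₂) : ℝ) : ℂ) *
            transAmp U w e' v e m₁ j n₁ k *
            (starRingEnd ℂ) (transAmp U w e' v e m₂ j n₂ k) = 0) := by
  have hQv := frame_mem_unitaryGroup hv
  have hQw := frame_mem_unitaryGroup hw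
  have hQe : frame e * (frame e)ᴴ = 1 := Unitary.mul_star_self_of_mem (frame_mem_unitaryGroup he)
  have hQe' : frame e' * (frame e')ᴴ = 1 :=
    Unitary.mul_star_self_of_mem (frame_mem_unitaryGroup he')
  rw [sum_smul_vecMulVec_eq_frame_mul_diagonal] at hγdec hγ'dec hξdec hξ'dec
  subst hξdec hξ'dec
  have hs' := eq_conj_diagonal_sqrt hQv hs.posSemidef (fun n => (hrγ n).le) (hssq.trans hγdec)
  have hr' := eq_conj_diagonal_sqrt hQw hr.posSemidef (fun m => (hrγ' m).le) (hrsq.trans hγ'dec)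
  have hsqrt_ne : ∀ m, ((√(rγ' m) : ℝ) : ℂ) ≠ 0 := fun m =>
    Complex.ofReal_ne_zero.mpr (Real.sqrt_pos.mpr (hrγ' m)).ne'
  change (∀ X, petzMap (adjointLinearMap hadj) s r X = tabletopMap U _ X) ↔ _
  rw [← LinearMap.ext_iff, linearMap_eq_iff_forall_conj_single_apply hQw hQv]
  refine forall₄_congr fun m₁ m₂ n₁ n₂ => ?_
  rw [hs', hr', conjTranspose_mul_petzMap_mul_apply hadj hQv hQw _ hsqrt_ne,
    conjTranspose_mul_ptraceE_kronecker_mul_apply U _ _ hQe',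
    conjTranspose_mul_tabletopMap_mul_apply U _ _ hQe]
  simp only [transAmp_eq_apply]
  exact sqrt_mul_star_sum_eq_sum_iff (hrγ n₁).le (hrγ' m₁) (hrγ' m₂) _ _ _ _

/-- Exact tabletop-reversibility criterion: the Petz recovery map of the channel
`N(ρ) = Tr_E(U(ρ⊗ξ)U†)` with prior `γ` equals the tabletop reverse map
`X ↦ Tr_E(U†(X⊗ξ')U)` iff for all `m₁ m₂ n₁ n₂`,
`Σ_{j,k} (p_k √(r_{n₁} r_{n₂}) − p'_j √(r'_{m₁} r'_{m₂})) Φ_{m₁j←n₁k} Φ*_{m₂j←n₂k} = 0`. -/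
theorem exact_TTR_iff {dS dE : ℕ}
    (U : Matrix (Fin dS × Fin dE) (Fin dS × Fin dE) ℂ)
    (hU : U ∈ Matrix.unitaryGroup (Fin dS × Fin dE) ℂ)
    (ξ ξ' : Matrix (Fin dE) (Fin dE) ℂ)
    (hξ : ξ.PosSemidef) (hξtr : ξ.trace = 1)
    (hξ' : ξ'.PosSemidef) (hξ'tr : ξ'.trace = 1)
    (γ : Matrix (Fin dS) (Fin dS) ℂ) (hγ : γ.PosDef) (hγtr : γ.trace = 1)
    (γ' : Matrix (Fin dS) (Fin dS) ℂ)
    (hγ'def : γ' = ptraceE (U * (γ ⊗ₖ ξ) * Uᴴ)) (hγ' : γ'.PosDef)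
    -- spectral decompositions
    (rγ : Fin dS → ℝ) (v : Fin dS → Fin dS → ℂ)
    (hrγ : ∀ n, 0 < rγ n)
    (hv : ∀ n l, star (v n) ⬝ᵥ v l = if n = l then (1 : ℂ) else 0)
    (hγdec : γ = ∑ n, (rγ n : ℂ) • Matrix.vecMulVec (v n) (star (v n)))
    (rγ' : Fin dS → ℝ) (w : Fin dS → Fin dS → ℂ)
    (hrγ' : ∀ m, 0 < rγ' m)
    (hw : ∀ m l, star (w m) ⬝ᵥ w l = if m = l then (1 : ℂ) else 0)
    (hγ'dec : γ' = ∑ m, (rγ' m : ℂ) • Matrix.vecMulVec (w m) (star (w m)))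
    (p : Fin dE → ℝ) (e : Fin dE → Fin dE → ℂ)
    (hp : ∀ k, 0 ≤ p k)
    (he : ∀ k l, star (e k) ⬝ᵥ e l = if k = l then (1 : ℂ) else 0)
    (hξdec : ξ = ∑ k, (p k : ℂ) • Matrix.vecMulVec (e k) (star (e k)))
    (p' : Fin dE → ℝ) (e' : Fin dE → Fin dE → ℂ)
    (hp' : ∀ j, 0 ≤ p' j)
    (he' : ∀ j l, star (e' j) ⬝ᵥ e' l = if j = l then (1 : ℂ) else 0)
    (hξ'dec : ξ' = ∑ j, (p' j : ℂ) • Matrix.vecMulVec (e' j) (star (e' j)))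
    -- Hilbert–Schmidt adjoint of the forward channel
    (Nadj : Matrix (Fin dS) (Fin dS) ℂ → Matrix (Fin dS) (Fin dS) ℂ)
    (hadj : ∀ X Y, (Xᴴ * ptraceE (U * (Y ⊗ₖ ξ) * Uᴴ)).trace = ((Nadj X)ᴴ * Y).trace)
    -- positive square roots of γ and γ'
    (s r : Matrix (Fin dS) (Fin dS) ℂ)
    (hs : s.PosDef) (hssq : s * s = γ)
    (hr : r.PosDef) (hrsq : r * r = γ') :
    (∀ X : Matrix (Fin dS) (Fin dS) ℂ,
        s * Nadj (r⁻¹ * X * r⁻¹) * s = ptraceE (Uᴴ * (X ⊗ₖ ξ') * U)) ↔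
    (∀ m₁ m₂ n₁ n₂ : Fin dS,
        ∑ j, ∑ k,
          ((p k * Real.sqrt (rγ n₁ * rγ n₂) - p' j * Real.sqrt (rγ' m₁ * rγ' m₂) : ℝ) : ℂ) *
            transAmp U w e' v e m₁ j n₁ k *
            (starRingEnd ℂ) (transAmp U w e' v e m₂ j n₂ k) = 0) :=
  exact_TTR_iff_general U ξ ξ' γ γ' rγ v hrγ hv hγdec rγ' w hrγ' hw hγ'dec p e he hξdec p' e' he'
    hξ'dec Nadj hadj s r hs hssq hr hrsq
end

section
/- Let γ be a positive definite density matrix and L an operator such that γ^{1/2} L† γ^{-1/2} = c L† for some nonzero scalar c. Then [ln γ, L† L] = 0 and [ln γ, γ^{-1/2} L γ L† γ^{-1/2}] = 0. -/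
/-!
Write `s = γ^{1/2}`. Taking adjoints in `s L† = c L† s` gives `L s = c̄ s L`, hence
`s (L†L) = c L† s L` and `(L†L) s = c̄ L† s L`. Conjugating by `s` and taking traces, with
`tr (L†L) ≠ 0` for `L ≠ 0`, forces `c = c̄`, so `L†L` commutes with `s`; in the same way so does
`L L†`, and `s⁻¹ L γ L† s⁻¹ = (s⁻¹ L s)(s L† s⁻¹) = |c|² L L†`. Whatever commutes with `s`
commutes with `γ = s²`, hence with `ln γ`, a continuous function of `γ`.
-/

open scoped ComplexOrder
open Matrix

section StarAlgebra

variable {R A : Type*} [Field R] [Ring A] [StarRing A] [Algebra R A] {s l : A} {c : R}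

theorem mul_star_mul_self_of_mul_star_eq_smul (h : s * star l = c • (star l * s)) :
    s * (star l * l) = c • (star l * s * l) := by
  rw [← mul_assoc, h, smul_mul_assoc]

variable [StarRing R] [StarModule R A]

theorem mul_eq_star_smul_mul_of_mul_star_eq_smul (hs : IsSelfAdjoint s)
    (h : s * star l = c • (star l * s)) : l * s = star c • (s * l) := by
  simpa [star_mul, hs.star_eq] using congrArg star h

theorem star_mul_self_mul_of_mul_star_eq_smul (hs : IsSelfAdjoint s)
    (h : s * star l = c • (star l * s)) :
    star l * l * s = star c • (star l * s * l) := by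
  rw [mul_assoc, mul_eq_star_smul_mul_of_mul_star_eq_smul hs h, mul_smul_comm, mul_assoc]

theorem commute_star_mul_self_of_mul_star_eq_smul (hs : IsSelfAdjoint s) (hc : IsSelfAdjoint c)
    (h : s * star l = c • (star l * s)) : Commute s (star l * l) := by
  rw [commute_iff_eq, mul_star_mul_self_of_mul_star_eq_smul h,
    star_mul_self_mul_of_mul_star_eq_smul hs h, hc.star_eq]

theorem commute_mul_star_self_of_mul_star_eq_smul (hs : IsSelfAdjoint s) (hc : IsSelfAdjoint c)
    (hc₀ : c ≠ 0) (h : s * star l = c • (star l * s)) : Commute s (l * star l) := by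
  have key : c • (s * (l * star l)) = c • (l * star l * s) := by
    calc c • (s * (l * star l)) = star c • (s * l) * star l := by
          rw [hc.star_eq, smul_mul_assoc, mul_assoc]
      _ = l * (s * star l) := by rw [← mul_eq_star_smul_mul_of_mul_star_eq_smul hs h, mul_assoc]
      _ = c • (l * star l * s) := by rw [h, mul_smul_comm, mul_assoc]
  simpa only [commute_iff_eq, inv_smul_smul₀ hc₀] using congrArg (c⁻¹ • ·) key

end StarAlgebra

theorem IsSelfAdjoint.commute_of_commute_exp {A : Type*} [NormedRing A] [StarRing A]
    [NormedAlgebra ℝ A] [ContinuousFunctionalCalculus ℝ A IsSelfAdjoint] [CompleteSpace A]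
    {a b : A} (ha : IsSelfAdjoint a) (h : Commute (NormedSpace.exp a) b) : Commute a b := by
  rw [← CFC.log_exp a ha]
  exact h.cfc_real Real.log

namespace Matrix

variable {n 𝕜 : Type*} [Fintype n] [DecidableEq n]

theorem IsHermitian.commute_of_commute_exp {a b : Matrix n n ℂ} (ha : a.IsHermitian)
    (h : Commute (NormedSpace.exp a) b) : Commute a b :=
  letI : CStarAlgebra (Matrix n n ℂ) := instCStarAlgebra
  IsSelfAdjoint.commute_of_commute_exp ha h

variable [RCLike 𝕜] {s L : Matrix n n 𝕜} {c : 𝕜}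

theorem isSelfAdjoint_of_mul_star_eq_smul (hs : IsUnit s.det) (hsH : IsSelfAdjoint s)
    (hL : L ≠ 0) (h : s * star L = c • (star L * s)) : IsSelfAdjoint c := by
  have hA : (star L * L).trace ≠ 0 := mt trace_conjTranspose_mul_self_eq_zero_iff.mp hL
  have key : star c • (s * (star L * L)) = c • (star L * L * s) := by
    rw [mul_star_mul_self_of_mul_star_eq_smul h, star_mul_self_mul_of_mul_star_eq_smul hsH h,
      smul_smul, smul_smul, mul_comm]
  have htr : star c * (s * (star L * L) * s⁻¹).trace = c * (star L * L * s * s⁻¹).trace := by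
    simpa only [smul_mul_assoc, trace_smul, smul_eq_mul] using
      congrArg (fun M => (M * s⁻¹).trace) key
  rw [trace_mul_cycle, nonsing_inv_mul _ hs, one_mul, mul_nonsing_inv_cancel_right _ _ hs] at htr
  exact mul_right_cancel₀ hA htr

theorem inv_mul_mul_mul_inv_eq_smul_mul_conjTranspose (hs : s.IsHermitian)
    (h : s * Lᴴ * s⁻¹ = c • Lᴴ) :
    s⁻¹ * (L * (s * s) * Lᴴ) * s⁻¹ = (star c * c) • (L * Lᴴ) := by
  have h' : s⁻¹ * L * s = star c • L := by
    simpa [conjTranspose_nonsing_inv, hs.eq, mul_assoc] using congrArg conjTranspose h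
  calc s⁻¹ * (L * (s * s) * Lᴴ) * s⁻¹ = (s⁻¹ * L * s) * (s * Lᴴ * s⁻¹) := by
        simp only [mul_assoc]
    _ = (star c * c) • (L * Lᴴ) := by rw [h, h', smul_mul_smul_comm]

end Matrix

theorem logGamma_commutators_general {d : ℕ}
    (γ L Lg s : Matrix (Fin d) (Fin d) ℂ)
    (hLg : Lg.IsHermitian) (hexp : NormedSpace.exp Lg = γ)
    (hs : s.PosDef) (hss : s * s = γ)
    (c : ℂ) (hc : c ≠ 0)
    (hconj : s * Lᴴ * s⁻¹ = c • Lᴴ) :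
    Lg * (Lᴴ * L) = (Lᴴ * L) * Lg ∧
    Lg * (s⁻¹ * (L * γ * Lᴴ) * s⁻¹) = (s⁻¹ * (L * γ * Lᴴ) * s⁻¹) * Lg := by
  rcases eq_or_ne L 0 with rfl | hL
  · simp
  subst hss
  have hsH : IsSelfAdjoint s := hs.isHermitian
  have hdet : IsUnit s.det := (isUnit_iff_isUnit_det s).mp hs.isUnit
  have hrel : s * Lᴴ = c • (Lᴴ * s) := by
    rw [← smul_mul_assoc, ← hconj, nonsing_inv_mul_cancel_right _ _ hdet]
  have hcH : IsSelfAdjoint c := isSelfAdjoint_of_mul_star_eq_smul hdet hsH hL hrel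
  have hlog : ∀ X, Commute s X → Commute Lg X := fun X hX =>
    hLg.commute_of_commute_exp (hexp ▸ hX.mul_left hX)
  rw [inv_mul_mul_mul_inv_eq_smul_mul_conjTranspose hs.isHermitian hconj]
  exact ⟨hlog _ (commute_star_mul_self_of_mul_star_eq_smul hsH hcH hrel),
    hlog _ ((commute_mul_star_self_of_mul_star_eq_smul hsH hcH hc hrel).smul_right _)⟩

/-- If conjugation by `γ^{1/2}` acts on `L†` as multiplication by a nonzero scalar `c`,
then `ln γ` commutes with `L†L` and with `γ^{-1/2} L γ L† γ^{-1/2}`.  Here `s` is the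
positive square root of `γ` and `Lg` is the Hermitian logarithm of `γ`, characterized by
`exp Lg = γ`. -/
theorem logGamma_commutators {d : ℕ}
    (γ L Lg s : Matrix (Fin d) (Fin d) ℂ)
    (hγ : γ.PosDef)
    (hLg : Lg.IsHermitian) (hexp : NormedSpace.exp Lg = γ)
    (hs : s.PosDef) (hss : s * s = γ)
    (c : ℂ) (hc : c ≠ 0)
    (hconj : s * Lᴴ * s⁻¹ = c • Lᴴ) :
    Lg * (Lᴴ * L) = (Lᴴ * L) * Lg ∧
    Lg * (s⁻¹ * (L * γ * Lᴴ) * s⁻¹) = (s⁻¹ * (L * γ * Lᴴ) * s⁻¹) * Lg :=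
  logGamma_commutators_general γ L Lg s hLg hexp hs hss c hc hconj
end
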